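/- Every nonzero element y of S = span_{F_2}(M_a') of Hamming weight 3 that has the form y = 1 ⊕ 2^α ⊕ 2^{α'} with 0 < α < α' satisfies α' < a - m, where m = 2^b - a - 1. -/

import Mathlib

/-!
Write `y` as the XOR of the `h(x)` over a finite set `X ⊆ M_a`. Each `h(x)` has exactly one bit
off the positions `2^i - 1`, namely `f(x) - 1`, and `f` is injective on `M_a`; so every
`f(x) - 1`, `x ∈ X`, is a bit of `y`, i.e. `α` or `α'`. Bit `0` of `y` gives some `v ∈ X` with
top bit set, and then `f(v) - 1 < a - m` by the Lemma. If `α' = f(v) - 1` we are done. If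
`α' = 2^(j+1) - 1`, then `X = {v}` and `v` has bits `b - 1` and `j`, so `2^(b-1) + 2^j ≤ a`, which
gives `α' < a - m`. Otherwise `α' = f(u) - 1` and `X = {u, v}`; as `y` has bit `0` but no bit
`2^(j+1) - 1`, the numbers `u` and `v` differ exactly in bit `b - 1`, so
`v = 2^(b-1) + u`, `f(v) = f(u) + 1`, and `α' < α`, which is impossible.
-/

open scoped Classical

noncomputable section

/-- `b = ⌊log₂ a⌋ + 1`. -/
def bb (a : ℕ) : ℕ := Nat.log 2 a + 1

/-- `m = 2^b - a - 1`. -/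
def mm (a : ℕ) : ℕ := 2 ^ bb a - a - 1

/-- `q = a - 2^(b-1)`. -/
def qq (a : ℕ) : ℕ := a - 2 ^ (bb a - 1)

/-- `M_a = {x : 0 < x ≤ a, x is not a power of 2}`. -/
def Ma (a : ℕ) : Set ℕ := {x | 0 < x ∧ x ≤ a ∧ ¬ ∃ k, x = 2 ^ k}

/-- `g(x) = 2x` if bit `b-1` of `x` is `0`, else `g(x) = 2x + 1 - 2^b`. -/
def gg (a x : ℕ) : ℕ := if x.testBit (bb a - 1) then 2 * x + 1 - 2 ^ bb a else 2 * x

/-- `f'(x) = x` if `x ∈ M_a`, else `f'(x) = x + 1 - 2⌈m/2⌉` (intended domain `g(M_a)`). -/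
def ff' (a x : ℕ) : ℕ := if x ∈ Ma a then x else x + 1 - 2 * ((mm a + 1) / 2)

/-- `f = f' ∘ g`. -/
def ff (a x : ℕ) : ℕ := ff' a (gg a x)

/-- the `j`-th binary digit of `x`, as a natural number. -/
def bitv (x j : ℕ) : ℕ := if x.testBit j then 1 else 0

/-- `h(x) = 2^(f(x)-1) + Σ_{j=0}^{b-2} x_j 2^(2^(j+1)-1) + x_{b-1}`. -/
def hh (a x : ℕ) : ℕ :=
  2 ^ (ff a x - 1) + (∑ j ∈ Finset.range (bb a - 1), bitv x j * 2 ^ (2 ^ (j + 1) - 1)) +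
    bitv x (bb a - 1)

/-- Hamming weight of `x` viewed as a vector in `F_2^a`. -/
def wt (a x : ℕ) : ℕ := ((Finset.range a).filter (fun j => x.testBit j)).card

/-- identification of `Z_{2^a}` with `F_2^a` via radix-2 representation. -/
def toVec (a x : ℕ) : Fin a → ZMod 2 := fun j => if x.testBit (j : ℕ) then 1 else 0

/-- `S`, the `F_2`-span of `M_a' = h(M_a)` inside `F_2^a`. -/
def Ssub (a : ℕ) : Submodule (ZMod 2) (Fin a → ZMod 2) :=
  Submodule.span (ZMod 2) (toVec a '' (hh a '' Ma a))

/-- `P_a = {0, 2^0, 2^1, …, 2^(a-1)}`. -/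
def Pa (a : ℕ) : Set ℕ := {0} ∪ {y | ∃ j < a, y = 2 ^ j}

/-- `Q_a = ∅` if `a+1` is a power of `2`, else `{1 ⊕ 2^j : a-m ≤ j ≤ a-1}`. -/
def Qa (a : ℕ) : Set ℕ :=
  if ∃ k, a + 1 = 2 ^ k then ∅ else {y | ∃ j, a - mm a ≤ j ∧ j < a ∧ y = 1 ^^^ 2 ^ j}

/-- `T_a = P_a ∪ Q_a`. -/
def Ta (a : ℕ) : Set ℕ := Pa a ∪ Qa a

end

open Finset

lemma not_exists_eq_two_pow_of_odd {n : ℕ} (hodd : n % 2 = 1) (hn : n ≠ 1) :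
    ¬ ∃ k, n = 2 ^ k := by
  rintro ⟨_ | k, rfl⟩
  · exact hn rfl
  · simp [pow_succ] at hodd

lemma not_exists_two_mul_eq_two_pow {x : ℕ} (hx : ¬ ∃ k, x = 2 ^ k) : ¬ ∃ k, 2 * x = 2 ^ k := by
  rintro ⟨_ | k, hk⟩
  · omega
  · exact hx ⟨k, by rw [pow_succ] at hk; omega⟩

lemma testBit_sum_two_pow (s : Finset ℕ) (p : ℕ) : (∑ i ∈ s, 2 ^ i).testBit p ↔ p ∈ s := by
  rw [← Nat.mem_bitIndices, ← List.mem_toFinset, Finset.toFinset_bitIndices_sum_two_pow]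

lemma testBit_one_xor_two_pow_xor_two_pow {α α' : ℕ} (hα : 0 < α) (hαα' : α < α') (p : ℕ) :
    (1 ^^^ 2 ^ α ^^^ 2 ^ α').testBit p ↔ p = 0 ∨ p = α ∨ p = α' := by
  rw [← pow_zero 2]
  simp only [Nat.testBit_xor, Nat.testBit_two_pow]
  grind

lemma two_pow_add_two_pow_le_of_testBit {x i k : ℕ} (hik : i < k) (hi : x.testBit i)
    (hk : x.testBit k) : 2 ^ k + 2 ^ i ≤ x := by
  have hmod : 2 ^ i ≤ x % 2 ^ k :=
    Nat.ge_two_pow_of_testBit (by rw [Nat.testBit_mod_two_pow]; simp [hik, hi])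
  have hdiv : 2 ^ k * 1 ≤ 2 ^ k * (x / 2 ^ k) := Nat.mul_le_mul_left _
    ((Nat.one_le_div_iff (by positivity)).mpr (Nat.ge_two_pow_of_testBit hk))
  have := Nat.div_add_mod x (2 ^ k)
  omega

lemma eq_two_pow_add_of_testBit_eq {k u v : ℕ} (hu : u < 2 ^ k) (hv : v < 2 ^ (k + 1))
    (hvk : v.testBit k) (h : ∀ j < k, u.testBit j = v.testBit j) : v = 2 ^ k + u := by
  apply Nat.eq_of_testBit_eq
  intro j
  rcases lt_trichotomy j k with hj | rfl | hj
  · rw [Nat.testBit_two_pow_add_gt hj, h j hj]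
  · rw [Nat.testBit_two_pow_add_eq, Nat.testBit_lt_two_pow hu, hvk, Bool.not_false]
  · have hkj : 2 ^ (k + 1) ≤ 2 ^ j := Nat.pow_le_pow_right two_pos hj
    have : 2 ^ k + u < 2 ^ (k + 1) := by rw [pow_succ]; omega
    rw [Nat.testBit_lt_two_pow (by omega), Nat.testBit_lt_two_pow (by omega)]

lemma odd_card_filter_pair {α : Type*} [DecidableEq α] {u v : α} (huv : u ≠ v) (P : α → Prop)
    [DecidablePred P] : Odd #{x ∈ {u, v} | P x} ↔ (P u ↔ ¬ P v) := by
  rw [filter_insert, filter_singleton]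
  by_cases hu : P u <;> by_cases hv : P v <;> simp [hu, hv, huv]

lemma exists_finset_sum_eq_of_mem_span_zmod_two {V : Type*} [AddCommMonoid V]
    [Module (ZMod 2) V] {s : Set V} {v : V} (hv : v ∈ Submodule.span (ZMod 2) s) :
    ∃ F : Finset V, ↑F ⊆ s ∧ ∑ w ∈ F, w = v := by
  obtain ⟨c, hcs, rfl⟩ := Submodule.mem_span_set.mp hv
  refine ⟨c.support, hcs, sum_congr rfl fun w hw => ?_⟩
  have hc : ∀ r : ZMod 2, r ≠ 0 → r = 1 := by decide
  rw [hc _ (Finsupp.mem_support_iff.mp hw)]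
  exact (one_smul _ w).symm

lemma two_pow_bb (a : ℕ) : 2 ^ bb a = 2 * 2 ^ (bb a - 1) := by
  simp [bb, pow_succ, mul_comm]

lemma two_pow_bb_sub_one_le {a : ℕ} (ha : a ≠ 0) : 2 ^ (bb a - 1) ≤ a := by
  simpa [bb] using Nat.pow_log_le_self 2 ha

lemma lt_two_pow_bb (a : ℕ) : a < 2 ^ bb a :=
  Nat.lt_pow_succ_log_self Nat.one_lt_two a

lemma testBit_bb_sub_one_iff {a x : ℕ} (hx : x ≤ a) :
    x.testBit (bb a - 1) ↔ 2 ^ (bb a - 1) ≤ x := by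
  refine ⟨Nat.ge_two_pow_of_testBit, fun h => Nat.testBit_of_two_pow_le_and_two_pow_add_one_gt h ?_⟩
  simpa [bb] using hx.trans_lt (lt_two_pow_bb a)

lemma three_le_of_mem_Ma {a x : ℕ} (hx : x ∈ Ma a) : 3 ≤ x := by
  obtain ⟨hx0, -, hxp⟩ := hx
  by_contra h
  interval_cases x
  exacts [hxp ⟨0, rfl⟩, hxp ⟨1, rfl⟩]

lemma ff_eq_cases {a x : ℕ} (hx : x ∈ Ma a) :
    (2 ^ (bb a - 1) < x ∧ ff a x = 2 * x + 1 - 2 ^ bb a) ∨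
    (2 * x ≤ a ∧ ff a x = 2 * x) ∨
    (x < 2 ^ (bb a - 1) ∧ a < 2 * x ∧ ff a x = 2 * x + 1 - 2 * ((mm a + 1) / 2)) := by
  have hx3 := three_le_of_mem_Ma hx
  obtain ⟨-, hxa, hxp⟩ := hx
  have hP := two_pow_bb_sub_one_le (a := a) (by omega)
  have haP := lt_two_pow_bb a
  have hbP := two_pow_bb a
  by_cases ht : x.testBit (bb a - 1)
  · have hPx : 2 ^ (bb a - 1) < x :=
      lt_of_le_of_ne ((testBit_bb_sub_one_iff hxa).mp ht) fun h => hxp ⟨_, h.symm⟩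
    have hg : 2 * x + 1 - 2 ^ bb a ∈ Ma a :=
      ⟨by omega, by omega, not_exists_eq_two_pow_of_odd (by omega) (by omega)⟩
    left
    rw [ff, gg, if_pos ht, ff', if_pos hg]
    exact ⟨hPx, rfl⟩
  · have hxP : x < 2 ^ (bb a - 1) := by
      by_contra h
      exact ht ((testBit_bb_sub_one_iff hxa).mpr (by omega))
    right
    by_cases h2x : 2 * x ≤ a
    · have hg : 2 * x ∈ Ma a := ⟨by omega, h2x, not_exists_two_mul_eq_two_pow hxp⟩
      left
      rw [ff, gg, if_neg ht, ff', if_pos hg]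
      exact ⟨h2x, rfl⟩
    · have hg : 2 * x ∉ Ma a := fun hg => h2x hg.2.1
      right
      rw [ff, gg, if_neg ht, ff', if_neg hg]
      exact ⟨hxP, by omega, rfl⟩

lemma ff_mem_Ma {a x : ℕ} (hx : x ∈ Ma a) : ff a x ∈ Ma a := by
  have hx3 := three_le_of_mem_Ma hx
  have hxa := hx.2.1
  have hP := two_pow_bb_sub_one_le (a := a) (by omega)
  have haP := lt_two_pow_bb a
  have hbP := two_pow_bb a
  have hm : mm a = 2 ^ bb a - a - 1 := rfl
  rcases ff_eq_cases hx with ⟨h, he⟩ | ⟨h, he⟩ | ⟨h, h', he⟩ <;> rw [he]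
  · exact ⟨by omega, by omega, not_exists_eq_two_pow_of_odd (by omega) (by omega)⟩
  · exact ⟨by omega, h, not_exists_two_mul_eq_two_pow hx.2.2⟩
  · exact ⟨by omega, by omega, not_exists_eq_two_pow_of_odd (by omega) (by omega)⟩

lemma three_le_ff {a x : ℕ} (hx : x ∈ Ma a) : 3 ≤ ff a x :=
  three_le_of_mem_Ma (ff_mem_Ma hx)

lemma ff_injOn (a : ℕ) : Set.InjOn (ff a) (Ma a) := by
  intro x hx y hy hxy
  have hx3 := three_le_of_mem_Ma hx
  have hxa := hx.2.1
  have hya := hy.2.1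
  have hP := two_pow_bb_sub_one_le (a := a) (by omega)
  have haP := lt_two_pow_bb a
  have hbP := two_pow_bb a
  have hm : mm a = 2 ^ bb a - a - 1 := rfl
  rcases ff_eq_cases hx with ⟨_, hex⟩ | ⟨_, hex⟩ | ⟨_, _, hex⟩ <;>
    rcases ff_eq_cases hy with ⟨_, hey⟩ | ⟨_, hey⟩ | ⟨_, _, hey⟩ <;>
    omega

lemma ff_of_two_mul_le {a x : ℕ} (hx : x ∈ Ma a) (h : 2 * x ≤ a) : ff a x = 2 * x := by
  have hP := two_pow_bb_sub_one_le (a := a) (by have := three_le_of_mem_Ma hx; omega)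
  have haP := lt_two_pow_bb a
  have hbP := two_pow_bb a
  rcases ff_eq_cases hx with ⟨_, _⟩ | ⟨_, he⟩ | ⟨_, _, _⟩ <;> omega

lemma ff_of_testBit {a x : ℕ} (hx : x ∈ Ma a) (ht : x.testBit (bb a - 1)) :
    ff a x = 2 * x + 1 - 2 ^ bb a := by
  have hPx := (testBit_bb_sub_one_iff hx.2.1).mp ht
  have haP := lt_two_pow_bb a
  have hbP := two_pow_bb a
  rcases ff_eq_cases hx with ⟨_, he⟩ | ⟨_, _⟩ | ⟨_, _, _⟩ <;> omega

lemma ff_le_sub_mm {a x : ℕ} (hx : x ∈ Ma a) (ht : x.testBit (bb a - 1)) :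
    ff a x ≤ a - mm a := by
  have := ff_of_testBit hx ht
  have := hx.2.1
  have := lt_two_pow_bb a
  have hm : mm a = 2 ^ bb a - a - 1 := rfl
  omega

lemma ff_two_pow_add {a u : ℕ} (hu : u ∈ Ma a) (hv : 2 ^ (bb a - 1) + u ∈ Ma a) :
    ff a (2 ^ (bb a - 1) + u) = ff a u + 1 := by
  have hvtop := (testBit_bb_sub_one_iff hv.2.1).mpr (Nat.le_add_right _ u)
  have hva := hv.2.1
  have haP := lt_two_pow_bb a
  have hbP := two_pow_bb a
  rw [ff_of_testBit hv hvtop, ff_of_two_mul_le hu (by omega)]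
  omega

lemma testBit_hh {a x : ℕ} (hx : x ∈ Ma a) (p : ℕ) :
    (hh a x).testBit p ↔ p = ff a x - 1 ∨
      (∃ j < bb a - 1, x.testBit j ∧ 2 ^ (j + 1) - 1 = p) ∨ (p = 0 ∧ x.testBit (bb a - 1)) := by
  obtain ⟨-, -, hfp⟩ := ff_mem_Ma hx
  have hf3 := three_le_ff hx
  set low := ((range (bb a - 1)).filter (fun j => x.testBit j)).image (fun j => 2 ^ (j + 1) - 1)
  set top := ({0} : Finset ℕ).filter (fun _ => x.testBit (bb a - 1))
  have hpos (j : ℕ) : 2 ≤ 2 ^ (j + 1) := Nat.le_self_pow (Nat.succ_ne_zero j) 2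
  have hdisj : Disjoint low top := by
    simp only [low, top, disjoint_left, mem_image, mem_filter, mem_singleton]
    rintro _ ⟨j, -, rfl⟩ ⟨h0, -⟩
    have := hpos j
    omega
  have hf : ff a x - 1 ∉ low ∪ top := by
    simp only [low, top, mem_union, mem_image, mem_filter, mem_singleton, not_or]
    refine ⟨?_, fun h => by omega⟩
    rintro ⟨j, -, hj⟩
    have := hpos j
    exact hfp ⟨j + 1, by omega⟩
  have hsum : hh a x = ∑ p ∈ insert (ff a x - 1) (low ∪ top), 2 ^ p := by
    rw [sum_insert hf, sum_union hdisj, sum_image, sum_filter, sum_filter, sum_singleton, hh]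
    · simp only [bitv, ite_mul, one_mul, zero_mul, pow_zero, add_assoc]
    · intro i _ j _ hij
      have := Nat.pow_right_injective le_rfl (show 2 ^ (i + 1) = 2 ^ (j + 1) by
        have := hpos i; have := hpos j; simp only at hij; omega)
      omega
  rw [hsum, testBit_sum_two_pow]
  simp only [low, top, mem_insert, mem_union, mem_image, mem_filter, mem_range, mem_singleton,
    and_assoc]

section testBit_hh

variable {a x : ℕ}

lemma testBit_hh_of_forall_ne (hx : x ∈ Ma a) {p : ℕ} (hp : ∀ k, p + 1 ≠ 2 ^ k) :
    (hh a x).testBit p ↔ p = ff a x - 1 := by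
  rw [testBit_hh hx]
  refine ⟨fun h => h.resolve_right ?_, Or.inl⟩
  rintro (⟨j, -, -, rfl⟩ | ⟨rfl, -⟩)
  · exact hp (j + 1) (Nat.sub_add_cancel Nat.one_le_two_pow)
  · exact hp 0 rfl

lemma testBit_hh_zero (hx : x ∈ Ma a) : (hh a x).testBit 0 ↔ x.testBit (bb a - 1) := by
  have := three_le_ff hx
  rw [testBit_hh hx]
  refine ⟨?_, fun h => Or.inr (Or.inr ⟨rfl, h⟩)⟩
  rintro (h | ⟨j, -, -, hj⟩ | ⟨-, h⟩)
  · omega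
  · have : 2 ≤ 2 ^ (j + 1) := Nat.le_self_pow (Nat.succ_ne_zero j) 2
    omega
  · exact h

lemma testBit_hh_two_pow_sub_one (hx : x ∈ Ma a) {j : ℕ} (hj : j < bb a - 1) :
    (hh a x).testBit (2 ^ (j + 1) - 1) ↔ x.testBit j := by
  obtain ⟨-, -, hfp⟩ := ff_mem_Ma hx
  have h2 : 2 ≤ 2 ^ (j + 1) := Nat.le_self_pow (Nat.succ_ne_zero j) 2
  rw [testBit_hh hx]
  refine ⟨?_, fun h => Or.inr (Or.inl ⟨j, hj, h, rfl⟩)⟩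
  rintro (h | ⟨i, -, hi, hij⟩ | ⟨h, -⟩)
  · exact absurd ⟨j + 1, by omega⟩ hfp
  · have h1 : 1 ≤ 2 ^ (i + 1) := Nat.one_le_two_pow
    have := Nat.pow_right_injective le_rfl (show 2 ^ (i + 1) = 2 ^ (j + 1) by omega)
    rwa [← Nat.succ_injective this]
  · omega

lemma testBit_hh_ff_sub_one (hx : x ∈ Ma a) {x' : ℕ} (hx' : x' ∈ Ma a) :
    (hh a x).testBit (ff a x' - 1) ↔ x = x' := by
  obtain ⟨-, -, hfp⟩ := ff_mem_Ma hx'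
  have := three_le_ff hx
  have := three_le_ff hx'
  rw [testBit_hh_of_forall_ne hx fun k hk => hfp ⟨k, by omega⟩]
  exact ⟨fun h => ff_injOn a hx hx' (by omega), fun h => by rw [h]⟩

end testBit_hh

lemma toVec_eq_one_iff {a n p : ℕ} (hp : p < a) : toVec a n ⟨p, hp⟩ = 1 ↔ n.testBit p := by
  unfold toVec
  split_ifs with h <;> simp [h]

lemma injOn_toVec_hh (a : ℕ) : Set.InjOn (fun x => toVec a (hh a x)) (Ma a) := by
  intro x hx x' hx' h
  have hlt : ff a x' - 1 < a := by
    have := three_le_ff hx'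
    have := (ff_mem_Ma hx').2.1
    omega
  simp only at h
  rw [← testBit_hh_ff_sub_one hx hx', ← toVec_eq_one_iff hlt, h, toVec_eq_one_iff,
    testBit_hh_ff_sub_one hx' hx']

/-- Coordinatewise form of `toVec a y = ∑ x ∈ X, toVec a (hh a x)` in `F_2^a`. -/
def IsXorOfHh (a : ℕ) (X : Finset ℕ) (y : ℕ) : Prop :=
  ↑X ⊆ Ma a ∧ ∀ p < a, (y.testBit p ↔ Odd #{x ∈ X | (hh a x).testBit p})

lemma exists_isXorOfHh_of_toVec_mem_Ssub {a y : ℕ} (hy : toVec a y ∈ Ssub a) :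
    ∃ X, IsXorOfHh a X y := by
  obtain ⟨F, hFS, hF⟩ := exists_finset_sum_eq_of_mem_span_zmod_two hy
  rw [Set.image_image] at hFS
  obtain ⟨X, hXMa, rfl⟩ := Finset.subset_set_image_iff.mp hFS
  refine ⟨X, hXMa, fun p hp => ?_⟩
  have key := congrFun hF ⟨p, hp⟩
  rw [sum_image ((injOn_toVec_hh a).mono hXMa), Finset.sum_apply] at key
  simp only [toVec, sum_boole] at key
  rw [← ZMod.natCast_eq_one_iff_odd, key]
  split_ifs with h <;> simp [h]

namespace IsXorOfHh

variable {a y α α' : ℕ} {X : Finset ℕ}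

lemma testBit_ff_sub_one (hX : IsXorOfHh a X y) {x : ℕ} (hx : x ∈ X) :
    y.testBit (ff a x - 1) := by
  have := three_le_ff (hX.1 hx)
  have := (ff_mem_Ma (hX.1 hx)).2.1
  rw [hX.2 _ (by omega),
    filter_congr fun x' hx' => testBit_hh_ff_sub_one (hX.1 hx') (hX.1 hx), filter_eq', if_pos hx,
    card_singleton]
  exact odd_one

lemma exists_mem_ff_sub_one_eq (hX : IsXorOfHh a X y) {p : ℕ} (hp : p < a)
    (hsp : ∀ k, p + 1 ≠ 2 ^ k) (hyp : y.testBit p) : ∃ x ∈ X, ff a x - 1 = p := by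
  rw [hX.2 p hp] at hyp
  obtain ⟨x, hxX, hxp⟩ := filter_nonempty_iff.mp (card_pos.mp hyp.pos)
  exact ⟨x, hxX, ((testBit_hh_of_forall_ne (hX.1 hxX) hsp).mp hxp).symm⟩

lemma testBit_zero_iff (hX : IsXorOfHh a X y) (ha : 0 < a) :
    y.testBit 0 ↔ Odd #{x ∈ X | x.testBit (bb a - 1)} := by
  rw [hX.2 0 ha, filter_congr fun x hx => testBit_hh_zero (hX.1 hx)]

lemma testBit_two_pow_sub_one_iff (hX : IsXorOfHh a X y) (ha : a ≠ 0) {j : ℕ}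
    (hj : j < bb a - 1) : y.testBit (2 ^ (j + 1) - 1) ↔ Odd #{x ∈ X | x.testBit j} := by
  have : 2 ^ (j + 1) ≤ 2 ^ (bb a - 1) := Nat.pow_le_pow_right two_pos hj
  have := two_pow_bb_sub_one_le ha
  rw [hX.2 _ (by omega), filter_congr fun x hx => testBit_hh_two_pow_sub_one (hX.1 hx) hj]

lemma ff_sub_one_eq_or (hX : IsXorOfHh a X y) (hy : ∀ p, y.testBit p ↔ p = 0 ∨ p = α ∨ p = α')
    {x : ℕ} (hx : x ∈ X) : ff a x - 1 = α ∨ ff a x - 1 = α' :=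
  ((hy _).mp (hX.testBit_ff_sub_one hx)).resolve_left (by have := three_le_ff (hX.1 hx); omega)

lemma lt_sub_mm_of_add_one_eq_two_pow (hX : IsXorOfHh a X y)
    (hy : ∀ p, y.testBit p ↔ p = 0 ∨ p = α ∨ p = α') (hαα' : α < α') (hα'a : α' < a)
    {v k : ℕ} (hv : v ∈ X) (hvtop : v.testBit (bb a - 1)) (hvα : ff a v - 1 = α)
    (hk : α' + 1 = 2 ^ k) : α' < a - mm a := by
  obtain ⟨-, hva, -⟩ := hX.1 hv
  have hbP := two_pow_bb a
  have haP := lt_two_pow_bb a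
  have hm : mm a = 2 ^ bb a - a - 1 := rfl
  obtain _ | j := k
  · omega
  have hj : j < bb a - 1 := by
    have := (Nat.pow_lt_pow_iff_right one_lt_two).mp (show 2 ^ (j + 1) < 2 ^ bb a by omega)
    omega
  obtain ⟨x, hxX, hxj⟩ := filter_nonempty_iff.mp <| card_pos.mp <|
    ((hX.testBit_two_pow_sub_one_iff (by omega) hj).mp ((hy _).mpr (by omega))).pos
  have hxv : x = v := by
    have := three_le_ff (hX.1 hxX)
    rcases hX.ff_sub_one_eq_or hy hxX with h | h
    · exact ff_injOn a (hX.1 hxX) (hX.1 hv) (by omega)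
    · exact absurd ⟨j + 1, by omega⟩ (ff_mem_Ma (hX.1 hxX)).2.2
  subst hxv
  have := two_pow_add_two_pow_le_of_testBit hj hxj hvtop
  rw [pow_succ] at hk
  omega

lemma eq_pair (hX : IsXorOfHh a X y) (hy : ∀ p, y.testBit p ↔ p = 0 ∨ p = α ∨ p = α')
    {u v : ℕ} (hu : u ∈ X) (hv : v ∈ X) (huα' : ff a u - 1 = α') (hvα : ff a v - 1 = α) :
    X = {u, v} := by
  refine Subset.antisymm (fun x hx => ?_) (insert_subset hu (singleton_subset_iff.mpr hv))
  have := three_le_ff (hX.1 hx)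
  have := three_le_ff (hX.1 hu)
  have := three_le_ff (hX.1 hv)
  rw [mem_insert, mem_singleton]
  rcases hX.ff_sub_one_eq_or hy hx with h | h
  · exact Or.inr (ff_injOn a (hX.1 hx) (hX.1 hv) (by omega))
  · exact Or.inl (ff_injOn a (hX.1 hx) (hX.1 hu) (by omega))

lemma ff_add_one_eq (hX : IsXorOfHh a X y) (hy : ∀ p, y.testBit p ↔ p = 0 ∨ p = α ∨ p = α')
    (hαα' : α < α') {u v : ℕ} (hu : u ∈ X) (hv : v ∈ X) (hvtop : v.testBit (bb a - 1))
    (huα' : ff a u - 1 = α') (hvα : ff a v - 1 = α) : ff a u + 1 = ff a v := by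
  have huv : u ≠ v := by rintro rfl; omega
  have hXuv := hX.eq_pair hy hu hv huα' hvα
  obtain ⟨-, hua, hup⟩ := ff_mem_Ma (hX.1 hu)
  obtain ⟨-, hva, hvp⟩ := ff_mem_Ma (hX.1 hv)
  have hlow : ∀ j < bb a - 1, u.testBit j = v.testBit j := by
    intro j hj
    have h2 : 2 ≤ 2 ^ (j + 1) := Nat.le_self_pow (Nat.succ_ne_zero j) 2
    have hy0 : ¬ y.testBit (2 ^ (j + 1) - 1) := by
      rw [hy]
      rintro (h | h | h)
      · omega
      · exact hvp ⟨j + 1, by omega⟩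
      · exact hup ⟨j + 1, by omega⟩
    rw [hX.testBit_two_pow_sub_one_iff (by omega) hj, hXuv, odd_card_filter_pair huv] at hy0
    exact Bool.eq_iff_iff.mpr (by tauto)
  have hutop : ¬ u.testBit (bb a - 1) := by
    have := (hX.testBit_zero_iff (by omega)).mp ((hy 0).mpr (Or.inl rfl))
    rw [hXuv, odd_card_filter_pair huv] at this
    tauto
  have huP : u < 2 ^ (bb a - 1) := by
    rw [testBit_bb_sub_one_iff (hX.1 hu).2.1] at hutop
    omega
  have hvP : v < 2 ^ (bb a - 1 + 1) := by
    simpa [bb] using (hX.1 hv).2.1.trans_lt (lt_two_pow_bb a)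
  have hvu := eq_two_pow_add_of_testBit_eq huP hvP hvtop hlow
  subst hvu
  exact (ff_two_pow_add (hX.1 hu) (hX.1 hv)).symm

end IsXorOfHh

theorem weight_three_elements_S_general (a : ℕ) :
    ∀ y α α' : ℕ, y < 2 ^ a → toVec a y ∈ Ssub a →
      y = 1 ^^^ 2 ^ α ^^^ 2 ^ α' → 0 < α → α < α' → α' < a - mm a := by
  rintro y α α' hya hyS rfl hα hαα'
  have hy := testBit_one_xor_two_pow_xor_two_pow hα hαα'
  have hα'a : α' < a := (Nat.pow_lt_pow_iff_right one_lt_two).mp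
    ((Nat.ge_two_pow_of_testBit ((hy α').mpr (by omega))).trans_lt hya)
  obtain ⟨X, hX⟩ := exists_isXorOfHh_of_toVec_mem_Ssub hyS
  obtain ⟨v, hvX, hvtop⟩ := filter_nonempty_iff.mp <| card_pos.mp <|
    ((hX.testBit_zero_iff (by omega)).mp ((hy 0).mpr (by omega))).pos
  have hvm := ff_le_sub_mm (hX.1 hvX) hvtop
  have hv3 := three_le_ff (hX.1 hvX)
  rcases hX.ff_sub_one_eq_or hy hvX with hvα | hvα'
  · by_cases hk : ∃ k, α' + 1 = 2 ^ k
    · obtain ⟨k, hk⟩ := hk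
      exact hX.lt_sub_mm_of_add_one_eq_two_pow hy hαα' hα'a hvX hvtop hvα hk
    · obtain ⟨u, huX, huα'⟩ :=
        hX.exists_mem_ff_sub_one_eq hα'a (not_exists.mp hk) ((hy α').mpr (by omega))
      have := hX.ff_add_one_eq hy hαα' huX hvX hvtop huα' hvα
      omega
  · omega

/-- every element of `S` of the form `1 ⊕ 2^α ⊕ 2^α'` with
`0 < α < α'` satisfies `α' < a - m`. -/
theorem weight_three_elements_S (a : ℕ) (ha : 3 ≤ a) :
    ∀ y α α' : ℕ, y < 2 ^ a → toVec a y ∈ Ssub a →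
      y = 1 ^^^ 2 ^ α ^^^ 2 ^ α' → 0 < α → α < α' → α' < a - mm a :=
  weight_three_elements_S_general a
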